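/- Let F be a finite chordal polynomial set in K[x_1,...,x_n] such that x_1 < ... < x_n is a perfect elimination ordering of G(F). If a pair (P, Q) of finite polynomial sets is obtained from the pair (F, ∅) by finitely many regular-decomposition steps and the nonzero elements of P are nonconstant with pairwise distinct leading variables, so that they form a triangular set T when ordered by leading variable, then G(T) ⊆ G(F). -/

import Mathlib

open MvPolynomial

variable {K : Type*} [Field K] {n : ℕ}

/-- The set of variables effectively appearing in a polynomial. -/
def psupp (F : MvPolynomial (Fin n) K) : Set (Fin n) := ↑F.vars

/-- The set of variables appearing in a set of polynomials. -/
def ssupp (P : Set (MvPolynomial (Fin n) K)) : Set (Fin n) :=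
  ⋃ F ∈ P, psupp F

/-- Adjacency in the associated graph `G(P)`: `p ≠ q` and some polynomial of `P`
contains both variables. -/
def adjG (P : Set (MvPolynomial (Fin n) K)) (p q : Fin n) : Prop :=
  p ≠ q ∧ ∃ F ∈ P, p ∈ psupp F ∧ q ∈ psupp F

/-- `G(P) ⊆ G(Q)`: every edge of `G(P)` is an edge of `G(Q)`. -/
def subG (P Q : Set (MvPolynomial (Fin n) K)) : Prop :=
  ∀ p q, adjG P p q → adjG Q p q

/-- The natural ordering `x_1 < ... < x_n` of the variables is a perfect elimination
ordering of `G(P)`; in particular `G(P)` is chordal. -/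
def isPEO (P : Set (MvPolynomial (Fin n) K)) : Prop :=
  ∀ p q k : Fin n, p < k → q < k → p ≠ q → adjG P p k → adjG P q k → adjG P p q

/-- `F` is nonconstant with leading variable `x_k`. -/
def hasLv (F : MvPolynomial (Fin n) K) (k : Fin n) : Prop :=
  k ∈ psupp F ∧ ∀ j ∈ psupp F, j ≤ k

/-- `P^(k)`: the polynomials of `P` with leading variable `x_k`. -/
def levelSet (P : Set (MvPolynomial (Fin n) K)) (k : Fin n) :
    Set (MvPolynomial (Fin n) K) :=
  {F | F ∈ P ∧ hasLv F k}

/-- A triangular set: a list of nonconstant polynomials with strictly increasing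
leading variables. -/
def IsTriangularSet (L : List (MvPolynomial (Fin n) K)) : Prop :=
  (∀ F ∈ L, (psupp F).Nonempty) ∧
    L.Chain' fun F G => ∃ a b, hasLv F a ∧ hasLv G b ∧ a < b

/-- A regular-decomposition step: transform a pair `(P, Q)` of polynomial sets, for
some index `k`, by one of the following branches.
(Right branch) choose `T ∈ P^(k)` and polynomials `I, R'` supported in `supp T`,
and pass to `((P \ {T}) ∪ {I, R'}, Q)`.
(Subresultant branch) choose distinct `T₁, T₂ ∈ P^(k)`, polynomials `H_2, ..., H_r`
with `supp (H m) ⊆ supp T₁ ∪ supp T₂`, polynomials `I_2, ..., I_r` with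
`supp (I m) ⊆ supp (H m)`, a polynomial `J` with `supp J ⊆ supp T₂`, and
`2 ≤ i ≤ r`, and pass to
`((P \ {T₁, T₂}) ∪ {H i, I_{i+1}, ..., I_r}, Q ∪ {J, I i})`.
(Mixed branch) choose `T₁ ∈ Q^(k)` and `T₂ ∈ P^(k)`, polynomials `H_2, ..., H_r`
and `S_2, ..., S_r` with supports in `supp T₁ ∪ supp T₂`, polynomials
`I_2, ..., I_r` with `supp (I m) ⊆ supp (H m)`, and `2 ≤ i ≤ r`, and pass to
`((P \ {T₂}) ∪ {S i, I_{i+1}, ..., I_r}, Q ∪ {I i})`, or for `i = r` also possibly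
to `((P \ {T₂}) ∪ {S r}, (Q \ {T₁}) ∪ {I r})`.
(Inequation branch) choose `Q₀ ∈ Q^(k)` and polynomials `I, R` supported in
`supp Q₀`, and pass to `(P ∪ {I}, (Q \ {Q₀}) ∪ {R})` or to `(P, Q ∪ {I})`. -/
def RegStep (PQ PQ' :
    Set (MvPolynomial (Fin n) K) × Set (MvPolynomial (Fin n) K)) : Prop :=
  ∃ k : Fin n,
    (∃ T ∈ levelSet PQ.1 k, ∃ I R' : MvPolynomial (Fin n) K,
        psupp I ⊆ psupp T ∧ psupp R' ⊆ psupp T ∧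
        PQ'.1 = (PQ.1 \ {T}) ∪ {I, R'} ∧ PQ'.2 = PQ.2) ∨
    (∃ T₁ T₂ : MvPolynomial (Fin n) K, T₁ ≠ T₂ ∧
        T₁ ∈ levelSet PQ.1 k ∧ T₂ ∈ levelSet PQ.1 k ∧
      ∃ (r : ℕ) (H I : ℕ → MvPolynomial (Fin n) K) (J : MvPolynomial (Fin n) K)
          (i : ℕ), 2 ≤ i ∧ i ≤ r ∧
        (∀ m, 2 ≤ m → m ≤ r → psupp (H m) ⊆ psupp T₁ ∪ psupp T₂) ∧
        (∀ m, 2 ≤ m → m ≤ r → psupp (I m) ⊆ psupp (H m)) ∧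
        psupp J ⊆ psupp T₂ ∧
        PQ'.1 = (PQ.1 \ {T₁, T₂}) ∪ {H i} ∪ (I '' {m | i < m ∧ m ≤ r}) ∧
        PQ'.2 = PQ.2 ∪ {J, I i}) ∨
    (∃ T₁ T₂ : MvPolynomial (Fin n) K,
        T₁ ∈ levelSet PQ.2 k ∧ T₂ ∈ levelSet PQ.1 k ∧
      ∃ (r : ℕ) (H S I : ℕ → MvPolynomial (Fin n) K) (i : ℕ), 2 ≤ i ∧ i ≤ r ∧
        (∀ m, 2 ≤ m → m ≤ r → psupp (H m) ⊆ psupp T₁ ∪ psupp T₂) ∧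
        (∀ m, 2 ≤ m → m ≤ r → psupp (S m) ⊆ psupp T₁ ∪ psupp T₂) ∧
        (∀ m, 2 ≤ m → m ≤ r → psupp (I m) ⊆ psupp (H m)) ∧
        PQ'.1 = (PQ.1 \ {T₂}) ∪ {S i} ∪ (I '' {m | i < m ∧ m ≤ r}) ∧
        (PQ'.2 = PQ.2 ∪ {I i} ∨ (i = r ∧ PQ'.2 = (PQ.2 \ {T₁}) ∪ {I i}))) ∨
    (∃ Q₀ ∈ levelSet PQ.2 k, ∃ I R : MvPolynomial (Fin n) K,
        psupp I ⊆ psupp Q₀ ∧ psupp R ⊆ psupp Q₀ ∧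
        ((PQ'.1 = PQ.1 ∪ {I} ∧ PQ'.2 = (PQ.2 \ {Q₀}) ∪ {R}) ∨
         (PQ'.1 = PQ.1 ∧ PQ'.2 = PQ.2 ∪ {I})))


/-!
Every polynomial produced by a regular-decomposition step has its support inside the support
of one input polynomial, or inside the union of the supports of two input polynomials
`T₁, T₂` with the same leading variable `x_k`. Call a polynomial good if its support is a
clique of `G(F)`. The polynomials of `F` are good, subsets of cliques are cliques, and if
`T₁, T₂` are good with leading variable `x_k`, then any `p ∈ supp T₁`, `q ∈ supp T₂` below
`x_k` are both neighbours of `x_k`, hence adjacent because the ordering is a perfect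
elimination ordering; so `supp T₁ ∪ supp T₂` is again a clique. Thus all polynomials
met along the decomposition are good, and every edge of `G(T)` is an edge of `G(F)`.
-/

lemma adjG_symm {P : Set (MvPolynomial (Fin n) K)} {p q : Fin n} (h : adjG P p q) :
    adjG P q p :=
  let ⟨hne, F, hF, hp, hq⟩ := h
  ⟨hne.symm, F, hF, hq, hp⟩

def assocGraph (P : Set (MvPolynomial (Fin n) K)) : SimpleGraph (Fin n) where
  Adj := adjG P
  symm := ⟨fun _ _ => adjG_symm⟩
  loopless := ⟨fun _ h => h.1 rfl⟩

lemma isClique_psupp_of_mem {P : Set (MvPolynomial (Fin n) K)} {F : MvPolynomial (Fin n) K}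
    (hF : F ∈ P) : (assocGraph P).IsClique (psupp F) :=
  fun _ hp _ hq hne => ⟨hne, F, hF, hp, hq⟩

lemma subG_of_isClique_psupp {P Fs : Set (MvPolynomial (Fin n) K)}
    (h : ∀ F ∈ P, (assocGraph Fs).IsClique (psupp F)) : subG P Fs :=
  fun _ _ ⟨hne, F, hF, hp, hq⟩ => h F hF hp hq hne

lemma SimpleGraph.IsClique.union_of_isGreatest {α : Type*} [LinearOrder α] {G : SimpleGraph α}
    (hpeo : ∀ p q k, p < k → q < k → p ≠ q → G.Adj p k → G.Adj q k → G.Adj p q)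
    {s t : Set α} {k : α} (hs : G.IsClique s) (ht : G.IsClique t)
    (hks : IsGreatest s k) (hkt : IsGreatest t k) : G.IsClique (s ∪ t) := by
  have := G.symm
  refine Set.pairwise_union_of_symm.2 ⟨hs, ht, fun p hp q hq hne => ?_⟩
  rcases (hks.2 hp).lt_or_eq with hpk | rfl
  · rcases (hkt.2 hq).lt_or_eq with hqk | rfl
    · exact hpeo p q k hpk hqk hne (hs hp hks.1 hpk.ne) (ht hq hkt.1 hqk.ne)
    · exact hs hp hks.1 hne
  · exact ht hkt.1 hq hne

/-- `T₁ = T₂` is allowed: this covers the steps that only shrink a single polynomial. -/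
def SupportedAtLevel (S : Set (MvPolynomial (Fin n) K)) (F : MvPolynomial (Fin n) K) : Prop :=
  ∃ k, ∃ T₁ ∈ S, ∃ T₂ ∈ S, hasLv T₁ k ∧ hasLv T₂ k ∧ psupp F ⊆ psupp T₁ ∪ psupp T₂

lemma supportedAtLevel_of_subset {S : Set (MvPolynomial (Fin n) K)}
    {T F : MvPolynomial (Fin n) K} {k : Fin n} (hT : T ∈ S) (hk : hasLv T k)
    (hF : psupp F ⊆ psupp T) : SupportedAtLevel S F :=
  ⟨k, T, hT, T, hT, hk, hk, hF.trans Set.subset_union_left⟩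

lemma RegStep.mem_or_supportedAtLevel {b c : Set (MvPolynomial (Fin n) K) ×
      Set (MvPolynomial (Fin n) K)} (hstep : RegStep b c) :
    ∀ F ∈ c.1 ∪ c.2, F ∈ b.1 ∪ b.2 ∨ SupportedAtLevel (b.1 ∪ b.2) F := by
  obtain ⟨k, hcase⟩ := hstep
  rcases hcase with
      ⟨T, hT, I, R', hI, hR, h1, h2⟩ |
      ⟨T₁, T₂, -, hT1, hT2, r, H, I, J, i, hi2, hir, hH, hIH, hJ, h1, h2⟩ |
      ⟨T₁, T₂, hT1, hT2, r, H, S, I, i, hi2, hir, hH, hS, hIH, h1, h2⟩ |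
      ⟨Q₀, hQ₀, I, R, hI, hR, hcase⟩
  · have single := fun {F} =>
      supportedAtLevel_of_subset (S := b.1 ∪ b.2) (F := F) (Or.inl hT.1) hT.2
    rw [h1, h2]
    rintro F ((⟨hF, -⟩ | rfl | rfl) | hF)
    exacts [.inl (.inl hF), .inr (single hI), .inr (single hR), .inl (.inr hF)]
  · have pair : ∀ F, psupp F ⊆ psupp T₁ ∪ psupp T₂ → SupportedAtLevel (b.1 ∪ b.2) F :=
      fun F hF => ⟨k, T₁, Or.inl hT1.1, T₂, Or.inl hT2.1, hT1.2, hT2.2, hF⟩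
    rw [h1, h2]
    rintro F (((⟨hF, -⟩ | rfl) | ⟨m, ⟨him, hmr⟩, rfl⟩) | hF | rfl | rfl)
    · exact .inl (.inl hF)
    · exact .inr (pair _ (hH i hi2 hir))
    · exact .inr (pair _ ((hIH m (hi2.trans him.le) hmr).trans (hH m (hi2.trans him.le) hmr)))
    · exact .inl (.inr hF)
    · exact .inr (supportedAtLevel_of_subset (S := b.1 ∪ b.2) (Or.inl hT2.1) hT2.2 hJ)
    · exact .inr (pair _ ((hIH i hi2 hir).trans (hH i hi2 hir)))
  · have pair : ∀ F, psupp F ⊆ psupp T₁ ∪ psupp T₂ → SupportedAtLevel (b.1 ∪ b.2) F :=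
      fun F hF => ⟨k, T₁, Or.inr hT1.1, T₂, Or.inl hT2.1, hT1.2, hT2.2, hF⟩
    have hIi : psupp (I i) ⊆ psupp T₁ ∪ psupp T₂ := (hIH i hi2 hir).trans (hH i hi2 hir)
    rw [h1]
    rintro F (((⟨hF, -⟩ | rfl) | ⟨m, ⟨him, hmr⟩, rfl⟩) | hF)
    · exact .inl (.inl hF)
    · exact .inr (pair _ (hS i hi2 hir))
    · exact .inr (pair _ ((hIH m (hi2.trans him.le) hmr).trans (hH m (hi2.trans him.le) hmr)))
    · rcases h2 with h2 | ⟨-, h2⟩ <;> rw [h2] at hF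
      · rcases hF with hF | rfl
        exacts [.inl (.inr hF), .inr (pair _ hIi)]
      · rcases hF with ⟨hF, -⟩ | rfl
        exacts [.inl (.inr hF), .inr (pair _ hIi)]
  · have single := fun {F} =>
      supportedAtLevel_of_subset (S := b.1 ∪ b.2) (F := F) (Or.inr hQ₀.1) hQ₀.2
    rcases hcase with ⟨h1, h2⟩ | ⟨h1, h2⟩ <;> rw [h1, h2]
    · rintro F ((hF | rfl) | ⟨hF, -⟩ | rfl)
      exacts [.inl (.inl hF), .inr (single hI), .inl (.inr hF), .inr (single hR)]
    · rintro F (hF | hF | rfl)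
      exacts [.inl (.inl hF), .inl (.inr hF), .inr (single hI)]

theorem isClique_psupp_of_reflTransGen_regStep {Fs : Set (MvPolynomial (Fin n) K)}
    (hpeo : isPEO Fs) {PQ : Set (MvPolynomial (Fin n) K) × Set (MvPolynomial (Fin n) K)}
    (h : Relation.ReflTransGen RegStep (Fs, ∅) PQ) :
    ∀ F ∈ PQ.1 ∪ PQ.2, (assocGraph Fs).IsClique (psupp F) := by
  have hpeo' : ∀ p q k, p < k → q < k → p ≠ q → (assocGraph Fs).Adj p k →
      (assocGraph Fs).Adj q k → (assocGraph Fs).Adj p q := hpeo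
  induction h with
  | refl =>
    rintro F (hF | hF)
    exacts [isClique_psupp_of_mem hF, hF.elim]
  | tail _ hstep ih =>
    intro F hF
    rcases hstep.mem_or_supportedAtLevel F hF with hF | ⟨k, T₁, hT₁, T₂, hT₂, hk₁, hk₂, hsub⟩
    · exact ih F hF
    · exact ((ih T₁ hT₁).union_of_isGreatest hpeo' (ih T₂ hT₂) hk₁ hk₂).subset hsub

theorem Set.Finite.exists_list_pairwise_lt_of_injOn {α β : Type*} [LinearOrder β] {s : Set α}
    (hs : s.Finite) {f : α → β} (hf : Set.InjOn f s) :
    ∃ L : List α, (∀ a, a ∈ L ↔ a ∈ s) ∧ L.Pairwise fun a b => f a < f b := by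
  classical
  set L := hs.toFinset.toList.mergeSort fun a b => decide (f a ≤ f b)
  have hperm : L.Perm hs.toFinset.toList := List.mergeSort_perm _ _
  have hmem : ∀ a, a ∈ L ↔ a ∈ s := by simp [hperm.mem_iff]
  have hsorted : L.Pairwise fun a b => decide (f a ≤ f b) :=
    List.pairwise_mergeSort (by simpa using fun _ _ _ => le_trans)
      (by simpa using fun _ _ => le_total _ _) _
  have hnodup : L.Nodup := hperm.nodup_iff.2 hs.toFinset.nodup_toList
  refine ⟨L, hmem, (hsorted.and hnodup).imp_of_mem fun ha hb ⟨hle, hne⟩ => ?_⟩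
  exact (of_decide_eq_true hle).lt_of_ne fun h => hne (hf ((hmem _).1 ha) ((hmem _).1 hb) h)

lemma hasLv.vars_max_eq {F : MvPolynomial (Fin n) K} {k : Fin n} (h : hasLv F k) :
    F.vars.max = k :=
  le_antisymm (Finset.max_le fun j hj => WithBot.coe_le_coe.2 (h.2 j hj)) (Finset.le_max h.1)

lemma exists_hasLv {F : MvPolynomial (Fin n) K} (h : (psupp F).Nonempty) : ∃ k, hasLv F k :=
  ⟨_, F.vars.isGreatest_max' (Finset.coe_nonempty.1 h)⟩

theorem exists_isTriangularSet {S : Set (MvPolynomial (Fin n) K)}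
    (hnc : ∀ G ∈ S, (psupp G).Nonempty)
    (hdist : ∀ G ∈ S, ∀ H ∈ S, G ≠ H → ∀ a b, hasLv G a → hasLv H b → a ≠ b) :
    ∃ L : List (MvPolynomial (Fin n) K), (∀ G, G ∈ L ↔ G ∈ S) ∧ IsTriangularSet L := by
  have hinj : Set.InjOn (fun G => G.vars.max) S := by
    intro G hG H hH hmax
    by_contra hne
    obtain ⟨a, ha⟩ := exists_hasLv (hnc G hG)
    obtain ⟨b, hb⟩ := exists_hasLv (hnc H hH)
    refine hdist G hG H hH hne a b ha hb (WithBot.coe_injective ?_)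
    rw [← ha.vars_max_eq, ← hb.vars_max_eq]
    exact hmax
  obtain ⟨L, hmem, hsorted⟩ :=
    (Set.toFinite _).of_finite_image hinj |>.exists_list_pairwise_lt_of_injOn hinj
  refine ⟨L, hmem, fun G hG => hnc G ((hmem G).1 hG), ?_⟩
  refine (hsorted.imp_of_mem fun {G H} hG hH hlt => ?_).isChain
  obtain ⟨a, ha⟩ := exists_hasLv (hnc G ((hmem G).1 hG))
  obtain ⟨b, hb⟩ := exists_hasLv (hnc H ((hmem H).1 hH))
  rw [ha.vars_max_eq, hb.vars_max_eq] at hlt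
  exact ⟨a, b, ha, hb, WithBot.coe_lt_coe.1 hlt⟩

theorem statement15_general {K : Type*} [Field K] {n : ℕ}
    (Fs : Set (MvPolynomial (Fin n) K)) (hpeo : isPEO Fs)
    (P Q : Set (MvPolynomial (Fin n) K))
    (h : Relation.ReflTransGen RegStep (Fs, ∅) (P, Q))
    (hnc : ∀ G ∈ P, G ≠ 0 → (psupp G).Nonempty)
    (hdist : ∀ G ∈ P, ∀ H ∈ P, G ≠ 0 → H ≠ 0 → G ≠ H →
      ∀ a b : Fin n, hasLv G a → hasLv H b → a ≠ b) :
    ∃ L : List (MvPolynomial (Fin n) K),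
      (∀ G, G ∈ L ↔ G ∈ P ∧ G ≠ 0) ∧ IsTriangularSet L ∧
      subG {G | G ∈ L} Fs := by
  obtain ⟨L, hmem, htri⟩ := exists_isTriangularSet (S := {G | G ∈ P ∧ G ≠ 0})
    (fun G hG => hnc G hG.1 hG.2) (fun G hG H hH => hdist G hG.1 H hH.1 hG.2 hH.2)
  have hclique := isClique_psupp_of_reflTransGen_regStep hpeo h
  exact ⟨L, hmem, htri, subG_of_isClique_psupp fun F hF => hclique F (.inl ((hmem F).1 hF).1)⟩

/-- let `Fs` be a finite chordal polynomial set whose natural variable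
ordering is a perfect elimination ordering, and let `(P, Q)` be obtained from
`(Fs, ∅)` by finitely many regular-decomposition steps.  If the nonzero elements of
`P` are nonconstant with pairwise distinct leading variables, then they form,
ordered by leading variable, a triangular set `L` with `G(L) ⊆ G(Fs)`. -/
theorem statement15 {K : Type*} [Field K] {n : ℕ}
    (Fs : Set (MvPolynomial (Fin n) K)) (hFfin : Fs.Finite) (hpeo : isPEO Fs)
    (P Q : Set (MvPolynomial (Fin n) K))
    (h : Relation.ReflTransGen RegStep (Fs, ∅) (P, Q))
    (hnc : ∀ G ∈ P, G ≠ 0 → (psupp G).Nonempty)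
    (hdist : ∀ G ∈ P, ∀ H ∈ P, G ≠ 0 → H ≠ 0 → G ≠ H →
      ∀ a b : Fin n, hasLv G a → hasLv H b → a ≠ b) :
    ∃ L : List (MvPolynomial (Fin n) K),
      (∀ G, G ∈ L ↔ G ∈ P ∧ G ≠ 0) ∧ IsTriangularSet L ∧
      subG {G | G ∈ L} Fs :=
  statement15_general Fs hpeo P Q h hnc hdist
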